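/- arXiv:1811.00069 — 10 statements merged into one kernel-verified Lean document; each statement's English description precedes it below -/
import Mathlib

section
/- Let B ∈ ℂ^{n×q}, C ∈ ℂ^{k×n} and Q ∈ ℂ^{n×n} with Q = Q* be given. Then the following two statements are equivalent: (i) there exists a matrix K ∈ ℂ^{q×k} such that BKC + (BKC)* + Q is negative definite; (ii) both of the following hold: [for every nonzero x ∈ ℂ^n with B*x = 0 one has x*Qx < 0, OR BB* is positive definite] and [for every nonzero x ∈ ℂ^n with Cx = 0 one has x*Qx < 0, OR C*C is positive definite]. -/
/-!
Necessity: on `ker Bᴴ` and on `ker C` the quadratic form of `BKC + (BKC)ᴴ` vanishes, and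
`BBᴴ` (resp. `CᴴC`) is positive definite only if that kernel is trivial.

Sufficiency: by Finsler's lemma there is `ρ ≥ 0` with `D = ρBBᴴ - Q` positive definite. Let
`E = ZC` be the `D`-orthogonal projection along `ker C` (built from a generalized inverse of
`C D⁻¹ Cᴴ`) and `K = -ρBᴴZ`. Then
`BKC + (BKC)ᴴ + Q = (1 - E)ᴴ Q (1 - E) - ρ (BᴴE)ᴴ(BᴴE) - Eᴴ D E`.
Since `(1 - E)x ∈ ker C`, the first term is negative at `x` unless `(1 - E)x = 0`, and then
`Ex = x ≠ 0` makes the last term negative.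
-/

open Matrix ComplexOrder

namespace Matrix

theorem exists_mul_mul_eq_self {m n K : Type*} [Fintype m] [Fintype n] [DecidableEq m]
    [DecidableEq n] [Field K] (A : Matrix m n K) : ∃ G : Matrix n m K, A * G * A = A := by
  obtain ⟨s, hs⟩ := A.mulVecLin.rangeRestrict.exists_rightInverse_of_surjective
    (LinearMap.range_rangeRestrict _)
  obtain ⟨g, hg⟩ := LinearMap.exists_extend s
  refine ⟨LinearMap.toMatrix' g, ext_iff_mulVec.mpr fun x => ?_⟩
  have hgA : g (A *ᵥ x) = s ⟨A *ᵥ x, x, rfl⟩ := LinearMap.congr_fun hg ⟨A *ᵥ x, x, rfl⟩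
  have hAs : A *ᵥ s ⟨A *ᵥ x, x, rfl⟩ = A *ᵥ x := by
    simpa using congrArg Subtype.val (LinearMap.congr_fun hs ⟨A *ᵥ x, x, rfl⟩)
  rw [← mulVec_mulVec, ← mulVec_mulVec, LinearMap.toMatrix'_mulVec, hgA, hAs]

variable {m n p : Type*} [Fintype n]

def NegDefOnKer (Q : Matrix n n ℂ) (A : Matrix m n ℂ) : Prop :=
  ∀ x : n → ℂ, x ≠ 0 → A *ᵥ x = 0 → (star x ⬝ᵥ (Q *ᵥ x)).re < 0

lemma star_dotProduct_conjTranspose_mulVec (N : Matrix n n ℂ) (x : n → ℂ) :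
    star x ⬝ᵥ (Nᴴ *ᵥ x) = star (star x ⬝ᵥ (N *ᵥ x)) := by
  rw [star_dotProduct, star_mulVec, ← dotProduct_mulVec, conjTranspose_conjTranspose]

lemma star_dotProduct_conjTranspose_mul_mul_mulVec [Fintype m] (A : Matrix m n ℂ)
    (M : Matrix m m ℂ) (x : n → ℂ) :
    star x ⬝ᵥ ((Aᴴ * M * A) *ᵥ x) = star (A *ᵥ x) ⬝ᵥ (M *ᵥ (A *ᵥ x)) := by
  simp only [star_mulVec, dotProduct_mulVec, vecMul_vecMul, ← mulVec_mulVec]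

lemma re_star_dotProduct_mulVec_smul (M : Matrix n n ℂ) (c : ℝ) (x : n → ℂ) :
    (star ((c : ℂ) • x) ⬝ᵥ (M *ᵥ ((c : ℂ) • x))).re = c ^ 2 * (star x ⬝ᵥ (M *ᵥ x)).re := by
  simp [star_smul, mulVec_smul, dotProduct_smul, smul_dotProduct, ← mul_assoc, sq]

lemma PosDef.of_re_dotProduct_mulVec_pos {M : Matrix n n ℂ} (hM : M.IsHermitian)
    (h : ∀ x : n → ℂ, x ≠ 0 → 0 < (star x ⬝ᵥ (M *ᵥ x)).re) : M.PosDef :=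
  .of_dotProduct_mulVec_pos hM fun x hx =>
    Complex.pos_iff.mpr ⟨h x hx, (hM.im_star_dotProduct_mulVec_self x).symm⟩

lemma PosSemidef.mulVec_eq_zero_of_re_dotProduct_eq_zero {A : Matrix n n ℂ} (hA : A.PosSemidef)
    {x : n → ℂ} (hx : (star x ⬝ᵥ (A *ᵥ x)).re = 0) : A *ᵥ x = 0 :=
  (hA.dotProduct_mulVec_zero_iff x).mp <|
    Complex.ext hx (hA.isHermitian.im_star_dotProduct_mulVec_self x)

lemma PosDef.eq_zero_of_mul_mul_conjTranspose_eq_zero [Fintype m] {Φ : Matrix n n ℂ}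
    (hΦ : Φ.PosDef) {N : Matrix m n ℂ} (h : N * Φ * Nᴴ = 0) : N = 0 := by
  rw [← conjTranspose_eq_zero, ext_iff_mulVec]
  intro v
  by_contra hv
  rw [zero_mulVec] at hv
  have := hΦ.dotProduct_mulVec_pos hv
  rw [← star_dotProduct_conjTranspose_mul_mul_mulVec, conjTranspose_conjTranspose, h] at this
  simp at this

lemma PosDef.mul_mul_conjTranspose_mul_mul_eq_self [Fintype m] {Φ : Matrix n n ℂ}
    (hΦ : Φ.PosDef) (C : Matrix m n ℂ) {G : Matrix m m ℂ}
    (hG : C * Φ * Cᴴ * G * (C * Φ * Cᴴ) = C * Φ * Cᴴ) :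
    C * Φ * Cᴴ * G * C = C := by
  set N := C - C * Φ * Cᴴ * G * C
  have hNC : N * Φ * Cᴴ = 0 := by
    rw [Matrix.sub_mul, Matrix.sub_mul, sub_eq_zero]
    simpa only [Matrix.mul_assoc] using hG.symm
  have hNN : N * Φ * Nᴴ = 0 := by
    rw [conjTranspose_sub, Matrix.mul_sub, hNC, zero_sub, neg_eq_zero]
    simp only [conjTranspose_mul, ← Matrix.mul_assoc, hNC, Matrix.zero_mul]
  exact (sub_eq_zero.mp (hΦ.eq_zero_of_mul_mul_conjTranspose_eq_zero hNN)).symm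

theorem PosDef.exists_orthogonal_projection_along_ker [Fintype m] [DecidableEq m]
    [DecidableEq n] {D : Matrix n n ℂ} (hD : D.PosDef) (C : Matrix m n ℂ) :
    ∃ Z : Matrix n m ℂ, C * (Z * C) = C ∧ (1 - Z * C)ᴴ * D * (Z * C) = 0 := by
  obtain ⟨G, hG⟩ := exists_mul_mul_eq_self (C * D⁻¹ * Cᴴ)
  have hDD : D * D⁻¹ = 1 := mul_nonsing_inv D ((isUnit_iff_isUnit_det D).mp hD.isUnit)
  have hCZC : C * (D⁻¹ * Cᴴ * G * C) = C := by
    simpa only [Matrix.mul_assoc] using hD.inv.mul_mul_conjTranspose_mul_mul_eq_self C hG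
  refine ⟨D⁻¹ * Cᴴ * G, hCZC, ?_⟩
  calc (1 - D⁻¹ * Cᴴ * G * C)ᴴ * D * (D⁻¹ * Cᴴ * G * C)
      = (C * (1 - D⁻¹ * Cᴴ * G * C))ᴴ * (G * C) := by
        simp only [conjTranspose_mul, Matrix.mul_assoc]
        rw [← Matrix.mul_assoc D, hDD, Matrix.one_mul]
    _ = 0 := by
        rw [Matrix.mul_sub, Matrix.mul_one, hCZC, sub_self, conjTranspose_zero, Matrix.zero_mul]

/-- Finsler's lemma. -/
theorem PosSemidef.exists_posDef_smul_sub {A Q : Matrix n n ℂ} (hA : A.PosSemidef)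
    (hQ : Q.IsHermitian) (h : NegDefOnKer Q A) :
    ∃ ρ : ℝ, 0 ≤ ρ ∧ ((ρ : ℂ) • A - Q).PosDef := by
  set f : (n → ℂ) → ℝ := fun x => (star x ⬝ᵥ (Q *ᵥ x)).re
  set g : (n → ℂ) → ℝ := fun x => (star x ⬝ᵥ (A *ᵥ x)).re
  have hg : ∀ x, 0 ≤ g x := hA.re_dotProduct_nonneg
  -- The open sets `{f < N g}` increase with `N` and cover the compact unit sphere.
  obtain ⟨N, hN⟩ : ∃ N : ℕ, Metric.sphere (0 : n → ℂ) 1 ⊆ {x | f x < N * g x} := by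
    refine (isCompact_sphere 0 1).elim_directed_cover _
      (fun N => isOpen_lt (by fun_prop) (by fun_prop)) (fun x hx => Set.mem_iUnion.mpr ?_)
      (Monotone.directed_le fun N N' hNN' x hx => ?_)
    · rcases (hg x).eq_or_lt with hgx | hgx
      · have hx0 : x ≠ 0 := by rintro rfl; simp at hx
        exact ⟨0, by simpa using h x hx0 (hA.mulVec_eq_zero_of_re_dotProduct_eq_zero hgx.symm)⟩
      · obtain ⟨N, hN⟩ := exists_nat_gt (f x / g x)
        exact ⟨N, (div_lt_iff₀ hgx).mp hN⟩
    · exact hx.trans_le (mul_le_mul_of_nonneg_right (by exact_mod_cast hNN') (hg x))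
  refine ⟨N, N.cast_nonneg,
    PosDef.of_re_dotProduct_mulVec_pos ((hA.isHermitian.smul ?_).sub hQ) fun x hx => ?_⟩
  · simp [IsSelfAdjoint]
  have hxn : 0 < ‖x‖ := norm_pos_iff.mpr hx
  have hu : f (((‖x‖⁻¹ : ℝ) : ℂ) • x) < N * g (((‖x‖⁻¹ : ℝ) : ℂ) • x) :=
    hN (by simp [norm_smul, hxn.ne'])
  simp only [f, g, re_star_dotProduct_mulVec_smul] at hu
  have : f x < N * g x := by
    have := pow_pos (inv_pos.mpr hxn) 2
    nlinarith
  simpa [sub_mulVec, smul_mulVec, dotProduct_sub, dotProduct_smul, f, g] using this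

lemma add_conjTranspose_add_eq_of_orthogonal [Fintype p] [DecidableEq n] {B : Matrix n p ℂ}
    {D E : Matrix n n ℂ} (ρ : ℝ) (hD : D.IsHermitian) (hE : (1 - E)ᴴ * D * E = 0) :
    -(ρ : ℂ) • (B * Bᴴ * E) + (-(ρ : ℂ) • (B * Bᴴ * E))ᴴ + ((ρ : ℂ) • (B * Bᴴ) - D) =
      (1 - E)ᴴ * ((ρ : ℂ) • (B * Bᴴ) - D) * (1 - E) - (ρ : ℂ) • ((Bᴴ * E)ᴴ * (Bᴴ * E))
        - Eᴴ * D * E := by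
  have hE' : Eᴴ * D * (1 - E) = 0 := by
    simpa [Matrix.mul_assoc, hD.eq] using congrArg conjTranspose hE
  simp only [conjTranspose_sub, conjTranspose_one, conjTranspose_mul, conjTranspose_smul,
    conjTranspose_conjTranspose, Complex.star_def, map_neg, Complex.conj_ofReal, Matrix.sub_mul,
    Matrix.mul_sub, Matrix.one_mul, Matrix.mul_one, Matrix.smul_mul, Matrix.mul_smul,
    Matrix.mul_assoc, sub_eq_zero] at hE hE' ⊢
  rw [← hE] at hE' ⊢
  rw [hE']
  module

theorem exists_gain_of_negDefOnKer [Fintype m] [Fintype p] [DecidableEq m] [DecidableEq n]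
    {B : Matrix n p ℂ} {C : Matrix m n ℂ} {Q : Matrix n n ℂ} (hQ : Q.IsHermitian)
    (hB : NegDefOnKer Q Bᴴ) (hC : NegDefOnKer Q C) :
    ∃ K : Matrix p m ℂ, ∀ x : n → ℂ, x ≠ 0 →
      (star x ⬝ᵥ ((B * K * C + (B * K * C)ᴴ + Q) *ᵥ x)).re < 0 := by
  obtain ⟨ρ, hρ, hD⟩ := (posSemidef_self_mul_conjTranspose B).exists_posDef_smul_sub hQ
    fun x hx hBx => hB x hx ((self_mul_conjTranspose_mulVec_eq_zero B x).mp hBx)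
  set D := (ρ : ℂ) • (B * Bᴴ) - Q
  obtain ⟨Z, hCZ, hZ⟩ := hD.exists_orthogonal_projection_along_ker C
  set E := Z * C
  refine ⟨-(ρ : ℂ) • (Bᴴ * Z), fun x hx => ?_⟩
  have hBKC : B * (-(ρ : ℂ) • (Bᴴ * Z)) * C = -(ρ : ℂ) • (B * Bᴴ * E) := by
    simp only [E, Matrix.mul_smul, Matrix.smul_mul, Matrix.mul_assoc]
  have hQD : Q = (ρ : ℂ) • (B * Bᴴ) - D := (sub_sub_cancel _ _).symm
  rw [hBKC, hQD, add_conjTranspose_add_eq_of_orthogonal ρ hD.isHermitian hZ, ← hQD, sub_mulVec,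
    sub_mulVec, dotProduct_sub, dotProduct_sub, Complex.sub_re, Complex.sub_re, smul_mulVec,
    dotProduct_smul, smul_eq_mul, Complex.re_ofReal_mul,
    star_dotProduct_conjTranspose_mul_mul_mulVec (1 - E),
    star_dotProduct_conjTranspose_mul_mul_mulVec E]
  have hw : 0 ≤ (star x ⬝ᵥ (((Bᴴ * E)ᴴ * (Bᴴ * E)) *ᵥ x)).re :=
    (posSemidef_conjTranspose_mul_self _).re_dotProduct_nonneg x
  have hCy : C *ᵥ ((1 - E) *ᵥ x) = 0 := by
    rw [mulVec_mulVec, Matrix.mul_sub, Matrix.mul_one, hCZ, sub_self, zero_mulVec]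
  by_cases hy : (1 - E) *ᵥ x = 0
  · have hEx : E *ᵥ x = x := by rwa [sub_mulVec, one_mulVec, sub_eq_zero, eq_comm] at hy
    have hDx : 0 < (star x ⬝ᵥ (D *ᵥ x)).re := hD.re_dotProduct_pos hx
    rw [hy, hEx, star_zero, zero_dotProduct, Complex.zero_re]
    nlinarith
  · have hQy := hC _ hy hCy
    have hDE : 0 ≤ (star (E *ᵥ x) ⬝ᵥ (D *ᵥ (E *ᵥ x))).re :=
      hD.posSemidef.re_dotProduct_nonneg _
    nlinarith

lemma negDefOnKer_of_add_conjTranspose {Q N : Matrix n n ℂ} {A : Matrix m n ℂ}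
    (h : ∀ x : n → ℂ, x ≠ 0 → (star x ⬝ᵥ ((N + Nᴴ + Q) *ᵥ x)).re < 0)
    (hN : ∀ x, A *ᵥ x = 0 → star x ⬝ᵥ (N *ᵥ x) = 0) : NegDefOnKer Q A := fun x hx hAx => by
  simpa [add_mulVec, dotProduct_add, star_dotProduct_conjTranspose_mulVec, hN x hAx] using h x hx

lemma NegDefOnKer.of_posDef_conjTranspose_mul_self [Fintype m] (Q : Matrix n n ℂ)
    {A : Matrix m n ℂ} (hA : (Aᴴ * A).PosDef) : NegDefOnKer Q A := fun x hx hAx =>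
  absurd (hA.dotProduct_mulVec_pos hx) (by simp [← mulVec_mulVec, hAx])

end Matrix

/-- Theorem 2.3.12 of Skelton et al.: existence of `K` with
`BKC + (BKC)* + Q` negative definite is equivalent to `Q` being negative definite
on the kernels of `B*` and of `C`, unless `BB*` (resp. `C*C`) is positive definite. -/
theorem dissipating_K_exists_iff {n q k : ℕ}
    (B : Matrix (Fin n) (Fin q) ℂ) (C : Matrix (Fin k) (Fin n) ℂ)
    (Q : Matrix (Fin n) (Fin n) ℂ) (hQ : Qᴴ = Q) :
    (∃ K : Matrix (Fin q) (Fin k) ℂ,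
        ∀ x : Fin n → ℂ, x ≠ 0 →
          (star x ⬝ᵥ ((B * K * C + (B * K * C)ᴴ + Q) *ᵥ x)).re < 0) ↔
      ((∀ x : Fin n → ℂ, x ≠ 0 → Bᴴ *ᵥ x = 0 → (star x ⬝ᵥ (Q *ᵥ x)).re < 0) ∨
          (B * Bᴴ).PosDef) ∧
        ((∀ x : Fin n → ℂ, x ≠ 0 → C *ᵥ x = 0 → (star x ⬝ᵥ (Q *ᵥ x)).re < 0) ∨
          (Cᴴ * C).PosDef) := by
  constructor
  · rintro ⟨K, hK⟩
    refine ⟨.inl (negDefOnKer_of_add_conjTranspose hK fun x hx => ?_),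
      .inl (negDefOnKer_of_add_conjTranspose hK fun x hx => ?_)⟩
    · rw [Matrix.mul_assoc, ← mulVec_mulVec, dotProduct_mulVec, ← conjTranspose_conjTranspose B,
        ← star_mulVec, hx, star_zero, zero_dotProduct]
    · rw [← mulVec_mulVec, hx, mulVec_zero, dotProduct_zero]
  · rintro ⟨hB, hC⟩
    refine exists_gain_of_negDefOnKer hQ (hB.elim id fun h => ?_)
      (hC.elim id (.of_posDef_conjTranspose_mul_self Q))
    exact .of_posDef_conjTranspose_mul_self Q (by rwa [conjTranspose_conjTranspose])
end

section
/- Let Q ∈ ℝ^{n×n} be symmetric, let B ∈ ℝ^{n×q} have full column rank, let R ∈ ℝ^{q×q} be symmetric positive definite such that the symmetric matrix B R^{-1} B^T − Q is positive definite, and set Φ := (B R^{-1} B^T − Q)^{-1}. Then for every L ∈ ℝ^{q×n} with spectral norm ‖L‖₂ < 1, the matrix K := −R^{-1} B^T + R^{-1/2} L Φ^{-1/2} satisfies that BK + K^T B^T + Q is negative definite. -/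
open Matrix
open scoped Matrix.Norms.L2Operator

section
open scoped ComplexOrder

/-- The square root of a positive semidefinite matrix, as defined in Mathlib (Dec 2024). -/
noncomputable def Matrix.PosSemidef.sqrt {𝕜 : Type*} [RCLike 𝕜] {n : Type*} [Fintype n]
    [DecidableEq n] {A : Matrix n n 𝕜} (hA : A.PosSemidef) : Matrix n n 𝕜 :=
  hA.1.eigenvectorUnitary.1 * diagonal ((↑) ∘ (Real.sqrt ∘ hA.1.eigenvalues)) *
  (star hA.1.eigenvectorUnitary : Matrix n n 𝕜)

end

open scoped RealInnerProductSpace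

section
open scoped ComplexOrder

theorem Matrix.PosSemidef.posSemidef_sqrt {𝕜 : Type*} [RCLike 𝕜] {n : Type*} [Fintype n]
    [DecidableEq n] {A : Matrix n n 𝕜} (hA : A.PosSemidef) : hA.sqrt.PosSemidef := by
  unfold Matrix.PosSemidef.sqrt
  have hD : (diagonal ((RCLike.ofReal : ℝ → 𝕜) ∘ (Real.sqrt ∘ hA.1.eigenvalues))).PosSemidef := by
    refine Matrix.posSemidef_diagonal_iff.2 fun i => ?_
    simp only [Function.comp_apply]
    exact RCLike.ofReal_nonneg.2 (Real.sqrt_nonneg _)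
  have := hD.mul_mul_conjTranspose_same (hA.1.eigenvectorUnitary : Matrix n n 𝕜)
  simpa [Matrix.star_eq_conjTranspose] using this

theorem Matrix.PosSemidef.sqrt_mul_self {𝕜 : Type*} [RCLike 𝕜] {n : Type*} [Fintype n]
    [DecidableEq n] {A : Matrix n n 𝕜} (hA : A.PosSemidef) : hA.sqrt * hA.sqrt = A := by
  unfold Matrix.PosSemidef.sqrt
  conv_rhs => rw [hA.1.spectral_theorem, Unitary.conjStarAlgAut_apply]
  have hU := Matrix.UnitaryGroup.star_mul_self hA.1.eigenvectorUnitary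
  calc _ = (hA.1.eigenvectorUnitary : Matrix n n 𝕜) *
        (diagonal ((RCLike.ofReal : ℝ → 𝕜) ∘ (Real.sqrt ∘ hA.1.eigenvalues)) *
          (star (hA.1.eigenvectorUnitary : Matrix n n 𝕜) * (hA.1.eigenvectorUnitary : Matrix n n 𝕜)) *
        diagonal ((RCLike.ofReal : ℝ → 𝕜) ∘ (Real.sqrt ∘ hA.1.eigenvalues))) *
        star (hA.1.eigenvectorUnitary : Matrix n n 𝕜) := by
          simp only [Matrix.mul_assoc]
    _ = _ := by
      rw [hU, Matrix.mul_one, diagonal_mul_diagonal]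
      congr 3
      funext i
      simp only [Function.comp_apply, ← RCLike.ofReal_mul]
      rw [Real.mul_self_sqrt (hA.eigenvalues_nonneg i)]

end

/-- the classical parametrization
`K = −R⁻¹Bᵀ + R^{-1/2} L Φ^{-1/2}` with `Φ = (B R⁻¹ Bᵀ − Q)⁻¹` and `‖L‖₂ < 1`
yields a dissipating feedback, i.e. `BK + KᵀBᵀ + Q` is negative definite. -/
theorem classical_parametrization_dissipates {n q : ℕ}
    (Q : Matrix (Fin n) (Fin n) ℝ) (hQ : Qᵀ = Q)
    (B : Matrix (Fin n) (Fin q) ℝ) (hB : B.rank = q)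
    (R : Matrix (Fin q) (Fin q) ℝ) (hR : R.PosDef)
    (hS : (B * R⁻¹ * Bᵀ - Q).PosDef)
    (L : Matrix (Fin q) (Fin n) ℝ) (hL : ‖L‖ < 1)
    (K : Matrix (Fin q) (Fin n) ℝ)
    (hK : K = -R⁻¹ * Bᵀ + (hR.posSemidef.sqrt)⁻¹ * L * (hS.inv.posSemidef.sqrt)⁻¹) :
    ∀ x : Fin n → ℝ, x ≠ 0 → x ⬝ᵥ ((B * K + Kᵀ * Bᵀ + Q) *ᵥ x) < 0 := by
  intro x hx
  set S : Matrix (Fin n) (Fin n) ℝ := B * R⁻¹ * Bᵀ - Q with hSdef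
  set W : Matrix (Fin q) (Fin q) ℝ := (hR.posSemidef.sqrt)⁻¹ with hWdef
  set T : Matrix (Fin n) (Fin n) ℝ := (hS.inv.posSemidef.sqrt)⁻¹ with hTdef
  -- symmetry of the square roots
  have hsqR : (hR.posSemidef.sqrt)ᵀ = hR.posSemidef.sqrt := by
    have := hR.posSemidef.posSemidef_sqrt.1
    rwa [Matrix.IsHermitian, conjTranspose_eq_transpose_of_trivial] at this
  have hsqS : (hS.inv.posSemidef.sqrt)ᵀ = hS.inv.posSemidef.sqrt := by
    have := hS.inv.posSemidef.posSemidef_sqrt.1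
    rwa [Matrix.IsHermitian, conjTranspose_eq_transpose_of_trivial] at this
  have hW : Wᵀ = W := by rw [hWdef, transpose_nonsing_inv, hsqR]
  have hT : Tᵀ = T := by rw [hTdef, transpose_nonsing_inv, hsqS]
  have hWW : W * W = R⁻¹ := by
    rw [hWdef, ← Matrix.mul_inv_rev, hR.posSemidef.sqrt_mul_self]
  have hTT : T * T = S := by
    rw [hTdef, ← Matrix.mul_inv_rev, hS.inv.posSemidef.sqrt_mul_self,
      Matrix.nonsing_inv_nonsing_inv _ (Matrix.isUnit_iff_isUnit_det _ |>.1 hS.isUnit)]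
  have hRT : (R⁻¹)ᵀ = R⁻¹ := by
    rw [transpose_nonsing_inv]
    congr 1
    have := hR.1
    rwa [Matrix.IsHermitian, conjTranspose_eq_transpose_of_trivial] at this
  -- algebraic identity
  have hM : B * K + Kᵀ * Bᵀ + Q
      = -((W * Bᵀ)ᵀ * (W * Bᵀ)) - Tᵀ * T + (W * Bᵀ)ᵀ * (L * T) + (L * T)ᵀ * (W * Bᵀ) := by
    subst hK
    simp only [transpose_add, transpose_neg, transpose_mul, transpose_transpose, hW, hT, hRT]
    rw [hTT, hSdef, ← hWW]
    simp only [Matrix.mul_add, Matrix.add_mul, Matrix.neg_mul, Matrix.mul_neg,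
      Matrix.sub_mul, Matrix.mul_sub, Matrix.mul_assoc]
    abel
  -- pass to vectors
  have key : ∀ {m : ℕ} (A C : Matrix (Fin m) (Fin n) ℝ),
      x ⬝ᵥ ((Aᵀ * C) *ᵥ x) = (A *ᵥ x) ⬝ᵥ (C *ᵥ x) := by
    intro m A C
    rw [← mulVec_mulVec, dotProduct_mulVec, vecMul_transpose]
  set u : Fin q → ℝ := (W * Bᵀ) *ᵥ x with hu
  set v : Fin n → ℝ := T *ᵥ x with hv
  set w : Fin q → ℝ := (L * T) *ᵥ x with hw
  have hsplit : x ⬝ᵥ ((B * K + Kᵀ * Bᵀ + Q) *ᵥ x)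
      = -(u ⬝ᵥ u) - v ⬝ᵥ v + u ⬝ᵥ w + w ⬝ᵥ u := by
    rw [hM]
    simp only [add_mulVec, sub_mulVec, neg_mulVec, dotProduct_add, dotProduct_sub,
      dotProduct_neg, key, ← hu, ← hv, ← hw]
  rw [hsplit]
  -- Euclidean space versions
  set u' : EuclideanSpace ℝ (Fin q) := (WithLp.equiv 2 _).symm u with hu'
  set v' : EuclideanSpace ℝ (Fin n) := (WithLp.equiv 2 _).symm v with hv'
  set w' : EuclideanSpace ℝ (Fin q) := (WithLp.equiv 2 _).symm w with hw'
  have huu : u ⬝ᵥ u = ‖u'‖ ^ 2 := by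
    rw [← real_inner_self_eq_norm_sq, hu', WithLp.equiv_symm_apply, EuclideanSpace.inner_toLp_toLp, star_trivial]
  have hvv : v ⬝ᵥ v = ‖v'‖ ^ 2 := by
    rw [← real_inner_self_eq_norm_sq, hv', WithLp.equiv_symm_apply, EuclideanSpace.inner_toLp_toLp, star_trivial]
  have huw : u ⬝ᵥ w = (inner ℝ u' w' : ℝ) := by
    rw [hu', hw', WithLp.equiv_symm_apply, EuclideanSpace.inner_toLp_toLp, star_trivial, dotProduct_comm]
  -- bound the cross term
  have hwv : w = L *ᵥ v := by rw [hw, hv, mulVec_mulVec]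
  have hw_le : ‖w'‖ ≤ ‖L‖ * ‖v'‖ := by
    have := L.l2_opNorm_mulVec v'
    simpa [hw', hwv, hv'] using this
  have hcross : u ⬝ᵥ w ≤ ‖u'‖ * (‖L‖ * ‖v'‖) := by
    rw [huw]
    calc (inner ℝ u' w' : ℝ) ≤ ‖u'‖ * ‖w'‖ := real_inner_le_norm u' w'
      _ ≤ ‖u'‖ * (‖L‖ * ‖v'‖) := mul_le_mul_of_nonneg_left hw_le (norm_nonneg u')
  -- positivity of ‖v'‖
  have hvpos : 0 < ‖v'‖ := by
    have hSx : 0 < x ⬝ᵥ (S *ᵥ x) := by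
      have := hS.dotProduct_mulVec_pos hx
      simpa using this
    have hvvS : v ⬝ᵥ v = x ⬝ᵥ (S *ᵥ x) := by
      rw [hv, ← key T T, hT, hTT]
    have h2 : 0 < ‖v'‖ ^ 2 := by rw [← hvv, hvvS]; exact hSx
    nlinarith [norm_nonneg v']
  have hLnn : 0 ≤ ‖L‖ := norm_nonneg L
  have hunn : 0 ≤ ‖u'‖ := norm_nonneg u'
  rw [huu, hvv, dotProduct_comm w u]
  nlinarith [mul_nonneg hLnn (sq_nonneg (‖u'‖ - ‖v'‖)),
    mul_pos (sub_pos.2 hL) (mul_pos hvpos hvpos)]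
end

section
/- Let A ∈ ℝ^{n×n} and let B ∈ ℝ^{n×q} have full column rank q. If the matrix −(A+A^T) is positive definite on the kernel of B^T (that is, x^T (A+A^T) x < 0 for every nonzero x ∈ ℝ^n with B^T x = 0), then the symmetric matrix M := [[−(A+A^T), B],[B^T, 0]] ∈ ℝ^{(n+q)×(n+q)} has exactly n positive eigenvalues and exactly q negative eigenvalues. -/
open Matrix

/-!
A subspace on which the quadratic form of a symmetric matrix is positive (negative) definite
meets the span of the eigenvectors with nonpositive (nonnegative) eigenvalues trivially, so its
dimension bounds the number of positive (negative) eigenvalues. Since the two numbers add up to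
at most `n + q`, it suffices to find such subspaces of dimensions `n` and `q` for
`M = [[H, B], [Bᵀ, 0]]`, `H = -(A + Aᵀ)`, whose form is `xᵀHx + 2xᵀBy`.
By Finsler's lemma `xᵀHx + c‖Bᵀx‖² > 0` for `x ≠ 0` and some `c`, so the form is positive on
`{(x, (c/2)Bᵀx)}`; and `wᵀHw < d‖w‖²` for `w ≠ 0` and some `d`, so the form is negative on
`{(-By, (d/2)y)}`, as `By ≠ 0` for `y ≠ 0` by the rank hypothesis.
-/

namespace Matrix

section Inertia

variable {ι κ : Type*} [Fintype ι] [DecidableEq ι] [Fintype κ] {M : Matrix ι ι ℝ}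
  (hM : M.IsHermitian)

theorem IsHermitian.dotProduct_mulVec_eq_sum_eigenvalues (v : ι → ℝ) :
    v ⬝ᵥ (M *ᵥ v) = ∑ i, hM.eigenvalues i *
      ((star (hM.eigenvectorUnitary : Matrix ι ι ℝ) *ᵥ v) i) ^ 2 := by
  conv_lhs => rw [hM.spectral_theorem, Unitary.conjStarAlgAut_apply]
  rw [← mulVec_mulVec, ← mulVec_mulVec, dotProduct_mulVec, star_eq_conjTranspose,
    conjTranspose_eq_transpose_of_trivial, ← mulVec_transpose]
  simp only [dotProduct, mulVec_diagonal, Function.comp_apply, RCLike.ofReal_real_eq_id, id]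
  exact Finset.sum_congr rfl fun i _ => by ring

theorem IsHermitian.card_le_card_of_eigenCoords_eq_zero (p : ℝ → Prop) (T : Matrix ι κ ℝ)
    (h : ∀ x, (∀ i, p (hM.eigenvalues i) →
      ((star (hM.eigenvectorUnitary : Matrix ι ι ℝ) * T) *ᵥ x) i = 0) → x = 0) :
    Fintype.card κ ≤ Nat.card {i // p (hM.eigenvalues i)} := by
  classical
  let C := (star (hM.eigenvectorUnitary : Matrix ι ι ℝ) * T).submatrix
    (Subtype.val : {i // p (hM.eigenvalues i)} → ι) id
  have hC : Function.Injective C.mulVecLin :=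
    (injective_iff_map_eq_zero _).2 fun x hx => h x fun i hi => congrFun hx ⟨i, hi⟩
  simpa only [Module.finrank_fintype_fun_eq_card, Nat.card_eq_fintype_card] using
    LinearMap.finrank_le_finrank_of_injective hC

theorem IsHermitian.card_le_card_pos_eigenvalues (T : Matrix ι κ ℝ)
    (h : ∀ x, x ≠ 0 → 0 < (T *ᵥ x) ⬝ᵥ (M *ᵥ (T *ᵥ x))) :
    Fintype.card κ ≤ Nat.card {i // 0 < hM.eigenvalues i} := by
  refine hM.card_le_card_of_eigenCoords_eq_zero (0 < ·) T fun x hx => ?_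
  by_contra hx0
  have hform := h x hx0
  rw [hM.dotProduct_mulVec_eq_sum_eigenvalues, mulVec_mulVec] at hform
  refine hform.not_ge (Finset.sum_nonpos fun i _ => ?_)
  rcases lt_or_ge 0 (hM.eigenvalues i) with hi | hi
  · simp [hx i hi]
  · exact mul_nonpos_of_nonpos_of_nonneg hi (sq_nonneg _)

theorem IsHermitian.card_le_card_neg_eigenvalues (T : Matrix ι κ ℝ)
    (h : ∀ x, x ≠ 0 → (T *ᵥ x) ⬝ᵥ (M *ᵥ (T *ᵥ x)) < 0) :
    Fintype.card κ ≤ Nat.card {i // hM.eigenvalues i < 0} := by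
  refine hM.card_le_card_of_eigenCoords_eq_zero (· < 0) T fun x hx => ?_
  by_contra hx0
  have hform := h x hx0
  rw [hM.dotProduct_mulVec_eq_sum_eigenvalues, mulVec_mulVec] at hform
  refine hform.not_ge (Finset.sum_nonneg fun i _ => ?_)
  rcases lt_or_ge (hM.eigenvalues i) 0 with hi | hi
  · simp [hx i hi]
  · exact mul_nonneg hi (sq_nonneg _)

end Inertia

theorem mulVecLin_injective_of_rank_eq_card {K m k : Type*} [Field K] [Fintype k]
    (B : Matrix m k K) (hB : B.rank = Fintype.card k) : Function.Injective B.mulVecLin := by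
  have := LinearMap.finrank_range_add_finrank_ker B.mulVecLin
  rw [← Matrix.rank, hB, Module.finrank_fintype_fun_eq_card, add_eq_left,
    Submodule.finrank_eq_zero] at this
  exact LinearMap.ker_eq_bot.1 this

variable {m k : Type*} [Fintype m] [Fintype k]

theorem dotProduct_mulVec_pos_of_forall_mem_sphere {P : Matrix m m ℝ}
    (h : ∀ u ∈ Metric.sphere (0 : m → ℝ) 1, 0 < u ⬝ᵥ (P *ᵥ u)) {x : m → ℝ} (hx : x ≠ 0) :
    0 < x ⬝ᵥ (P *ᵥ x) := by
  have hr : 0 < ‖x‖ := norm_pos_iff.mpr hx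
  have hu : ‖x‖⁻¹ • x ∈ Metric.sphere (0 : m → ℝ) 1 := by simp [norm_smul, hr.ne']
  have hx' : x = ‖x‖ • (‖x‖⁻¹ • x) := by rw [smul_smul, mul_inv_cancel₀ hr.ne', one_smul]
  rw [hx', mulVec_smul, dotProduct_smul, smul_dotProduct, smul_eq_mul, smul_eq_mul]
  have := h _ hu
  positivity

/-- **Finsler's lemma**. -/
theorem exists_forall_dotProduct_mulVec_add_mul_pos (H : Matrix m m ℝ) (B : Matrix m k ℝ)
    (h : ∀ x, x ≠ 0 → Bᵀ *ᵥ x = 0 → 0 < x ⬝ᵥ (H *ᵥ x)) :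
    ∃ c : ℝ, ∀ x, x ≠ 0 → 0 < x ⬝ᵥ (H *ᵥ x) + c * ((Bᵀ *ᵥ x) ⬝ᵥ (Bᵀ *ᵥ x)) := by
  let P : ℕ → Matrix m m ℝ := fun j => H + (j : ℝ) • (B * Bᵀ)
  have hP : ∀ j x, x ⬝ᵥ (P j *ᵥ x) = x ⬝ᵥ (H *ᵥ x) + j * ((Bᵀ *ᵥ x) ⬝ᵥ (Bᵀ *ᵥ x)) := by
    intro j x
    rw [add_mulVec, smul_mulVec, dotProduct_add, dotProduct_smul, smul_eq_mul, ← mulVec_mulVec,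
      dotProduct_mulVec x B, ← mulVec_transpose]
  -- On the unit sphere, `Bᵀ u = 0` forces `0 < uᵀ H u`, and otherwise a large multiple of
  -- `‖Bᵀ u‖² > 0` wins; compactness makes one multiple work for the whole sphere.
  have hcover : Metric.sphere (0 : m → ℝ) 1 ⊆ ⋃ j, {u | 0 < u ⬝ᵥ (P j *ᵥ u)} := by
    intro u hu
    have hu0 : u ≠ 0 := Metric.ne_of_mem_sphere hu one_ne_zero
    simp only [Set.mem_iUnion, Set.mem_ofPred_eq, hP]
    by_cases hBu : Bᵀ *ᵥ u = 0
    · exact ⟨0, by simpa [hBu] using h u hu0 hBu⟩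
    · have hf : 0 < (Bᵀ *ᵥ u) ⬝ᵥ (Bᵀ *ᵥ u) := by
        simpa using dotProduct_star_self_pos_iff.2 hBu
      obtain ⟨j, hj⟩ := exists_nat_gt (-(u ⬝ᵥ (H *ᵥ u)) / (Bᵀ *ᵥ u) ⬝ᵥ (Bᵀ *ᵥ u))
      rw [div_lt_iff₀ hf] at hj
      exact ⟨j, by linarith⟩
  have hmono : Monotone fun j => {u | 0 < u ⬝ᵥ (P j *ᵥ u)} := by
    intro i j hij u hu
    simp only [Set.mem_ofPred_eq, hP] at hu ⊢
    have hij' : (i : ℝ) ≤ j := by exact_mod_cast hij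
    have hf : 0 ≤ (Bᵀ *ᵥ u) ⬝ᵥ (Bᵀ *ᵥ u) := by
      simpa using dotProduct_star_self_nonneg (Bᵀ *ᵥ u)
    nlinarith
  obtain ⟨j, hj⟩ := (isCompact_sphere (0 : m → ℝ) 1).elim_directed_cover _
    (fun j => isOpen_lt continuous_const
      (continuous_id.dotProduct (continuous_const.matrix_mulVec continuous_id)))
    hcover hmono.directed_le
  exact ⟨j, fun x hx => hP j x ▸ dotProduct_mulVec_pos_of_forall_mem_sphere hj hx⟩

theorem sumElim_dotProduct_fromBlocks_mulVec {R : Type*} [CommRing R] (H : Matrix m m R)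
    (B : Matrix m k R) (x : m → R) (y : k → R) :
    Sum.elim x y ⬝ᵥ (fromBlocks H B Bᵀ 0 *ᵥ Sum.elim x y) =
      x ⬝ᵥ (H *ᵥ x) + 2 * (x ⬝ᵥ (B *ᵥ y)) := by
  rw [fromBlocks_mulVec, sumElim_dotProduct_sumElim, Sum.elim_comp_inl, Sum.elim_comp_inr,
    zero_mulVec, add_zero, dotProduct_mulVec y, ← mulVec_transpose, transpose_transpose,
    dotProduct_comm (B *ᵥ y), dotProduct_add]
  ring

end Matrix

theorem Nat.card_lt_add_card_gt_le_card {ι α : Type*} [Fintype ι] [Preorder α] (f : ι → α)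
    (a : α) : Nat.card {i // a < f i} + Nat.card {i // f i < a} ≤ Fintype.card ι := by
  classical
  simp only [Nat.card_eq_fintype_card]
  rw [← Fintype.card_subtype_or_disjoint _ _
    fun p hp hq i hi => ((hp i hi).trans (hq i hi)).false]
  exact Fintype.card_subtype_le _

/-- Proposition of Chipman–Chipman type: if `−(A+Aᵀ)` is positive
definite on the kernel of `Bᵀ` and `B` has full column rank `q`, then the saddle-point
matrix `M = [[−(A+Aᵀ), B],[Bᵀ, 0]]` has exactly `n` positive and `q` negative eigenvalues. -/
theorem saddle_point_eigenvalue_count {n q : ℕ}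
    (A : Matrix (Fin n) (Fin n) ℝ) (B : Matrix (Fin n) (Fin q) ℝ)
    (hB : B.rank = q)
    (hker : ∀ x : Fin n → ℝ, x ≠ 0 → Bᵀ *ᵥ x = 0 → x ⬝ᵥ ((A + Aᵀ) *ᵥ x) < 0)
    (M : Matrix (Fin n ⊕ Fin q) (Fin n ⊕ Fin q) ℝ)
    (hM : M = Matrix.fromBlocks (-(A + Aᵀ)) B Bᵀ 0)
    (hHerm : M.IsHermitian) :
    Nat.card {i : Fin n ⊕ Fin q // 0 < hHerm.eigenvalues i} = n ∧
      Nat.card {i : Fin n ⊕ Fin q // hHerm.eigenvalues i < 0} = q := by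
  subst hM
  obtain ⟨c, hc⟩ := exists_forall_dotProduct_mulVec_add_mul_pos (-(A + Aᵀ)) B
    fun x hx hBx => by
      rw [neg_mulVec, dotProduct_neg]
      exact neg_pos.2 (hker x hx hBx)
  -- With `B = 1` the kernel condition is vacuous.
  obtain ⟨d, hd⟩ := exists_forall_dotProduct_mulVec_add_mul_pos (A + Aᵀ)
    (1 : Matrix (Fin n) (Fin n) ℝ) fun x hx h1 => absurd (by simpa using h1) hx
  simp only [transpose_one, one_mulVec] at hd
  have hBinj := mulVecLin_injective_of_rank_eq_card B (by rw [hB, Fintype.card_fin])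
  have hpos : n ≤ Nat.card {i // 0 < hHerm.eigenvalues i} := by
    simpa using hHerm.card_le_card_pos_eigenvalues (fromRows 1 ((c / 2) • Bᵀ)) fun x hx => by
      rw [fromRows_mulVec, sumElim_dotProduct_fromBlocks_mulVec, one_mulVec, smul_mulVec,
        mulVec_smul, dotProduct_smul, smul_eq_mul, dotProduct_mulVec x B, ← mulVec_transpose]
      linarith [hc x hx]
  have hneg : q ≤ Nat.card {i // hHerm.eigenvalues i < 0} := by
    simpa using hHerm.card_le_card_neg_eigenvalues (fromRows (-B) ((d / 2) • 1)) fun y hy => by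
      have hw : B *ᵥ y ≠ 0 := fun h0 => hy (hBinj (h0.trans (mulVec_zero B).symm))
      rw [fromRows_mulVec, sumElim_dotProduct_fromBlocks_mulVec, smul_mulVec, one_mulVec,
        mulVec_smul, dotProduct_smul, smul_eq_mul, neg_mulVec, mulVec_neg, dotProduct_neg,
        neg_dotProduct, neg_dotProduct, neg_neg, neg_mulVec, dotProduct_neg]
      linarith [hd (B *ᵥ y) hw]
  have htotal := Nat.card_lt_add_card_gt_le_card hHerm.eigenvalues 0
  rw [Fintype.card_sum, Fintype.card_fin, Fintype.card_fin] at htotal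
  omega
end

section
/- Let A ∈ ℝ^{n×n} and B ∈ ℝ^{n×q}. The matrix A + A^T is negative definite on the kernel of B^T (that is, x^T (A+A^T) x < 0 for every nonzero x ∈ ℝ^n with B^T x = 0) if and only if there exists a matrix K ∈ ℝ^{q×n} such that (A−BK) + (A−BK)^T is negative definite. -/
open Matrix

private lemma quad_smul {n : ℕ} (M : Matrix (Fin n) (Fin n) ℝ) (t : ℝ) (x : Fin n → ℝ) :
    (t • x) ⬝ᵥ (M *ᵥ (t • x)) = t ^ 2 * (x ⬝ᵥ (M *ᵥ x)) := by
  rw [mulVec_smul, dotProduct_smul, smul_dotProduct, smul_eq_mul, smul_eq_mul]; ring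

private lemma cont_quad {n : ℕ} (M : Matrix (Fin n) (Fin n) ℝ) :
    Continuous fun x : Fin n → ℝ => x ⬝ᵥ (M *ᵥ x) := by
  simp only [dotProduct, mulVec]
  exact continuous_finset_sum _ fun i _ =>
    (continuous_apply i).mul (continuous_finset_sum _ fun j _ =>
      continuous_const.mul (continuous_apply j))

/-- Theorem 3.2 of the paper: `A + Aᵀ` is negative definite on the
kernel of `Bᵀ` if and only if there exists `K` with `(A−BK) + (A−BK)ᵀ` negative definite
(i.e. `K` is a dissipating feedback: `W(A−BK) ⊂ ℂ⁻`). -/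
theorem dissipating_feedback_exists_iff {n q : ℕ}
    (A : Matrix (Fin n) (Fin n) ℝ) (B : Matrix (Fin n) (Fin q) ℝ) :
    (∀ x : Fin n → ℝ, x ≠ 0 → Bᵀ *ᵥ x = 0 → x ⬝ᵥ ((A + Aᵀ) *ᵥ x) < 0) ↔
      ∃ K : Matrix (Fin q) (Fin n) ℝ,
        ∀ x : Fin n → ℝ, x ≠ 0 →
          x ⬝ᵥ (((A - B * K) + (A - B * K)ᵀ) *ᵥ x) < 0 := by
  constructor
  · intro h
    set S := A + Aᵀ with hS
    set f : (Fin n → ℝ) → ℝ := fun x => x ⬝ᵥ (S *ᵥ x) with hf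
    set g : (Fin n → ℝ) → ℝ := fun x => x ⬝ᵥ ((B * Bᵀ) *ᵥ x) with hg
    have hgalt : ∀ x, g x = (Bᵀ *ᵥ x) ⬝ᵥ (Bᵀ *ᵥ x) := by
      intro x
      show x ⬝ᵥ ((B * Bᵀ) *ᵥ x) = _
      rw [← mulVec_mulVec, dotProduct_mulVec, ← mulVec_transpose]
    have hg0 : ∀ x, 0 ≤ g x := by
      intro x
      rw [hgalt x]
      exact Finset.sum_nonneg fun i _ => mul_self_nonneg _
    have hfc : Continuous f := cont_quad S
    have hgc : Continuous g := cont_quad (B * Bᵀ)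
    obtain ⟨c, hc⟩ : ∃ c : ℕ,
        Metric.sphere (0 : Fin n → ℝ) 1 ⊆ {x | f x - 2 * c * g x < 0} := by
      apply (isCompact_sphere (0 : Fin n → ℝ) 1).elim_directed_cover
        (fun c : ℕ => {x | f x - 2 * c * g x < 0})
      · intro c
        exact isOpen_lt (hfc.sub (continuous_const.mul hgc)) continuous_const
      · intro x hx
        have hx0 : x ≠ 0 := by
          intro h0
          simp [h0] at hx
        simp only [Set.mem_iUnion, Set.mem_setOf_eq]
        rcases eq_or_lt_of_le (hg0 x) with h0 | hpos
        · refine ⟨0, ?_⟩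
          have hker : Bᵀ *ᵥ x = 0 := by
            rw [← dotProduct_self_eq_zero, ← hgalt x, ← h0]
          have := h x hx0 hker
          simpa using this
        · obtain ⟨c, hcgt⟩ := exists_nat_gt (f x / (2 * g x))
          refine ⟨c, ?_⟩
          have h2g : 0 < 2 * g x := by linarith
          rw [div_lt_iff₀ h2g] at hcgt
          nlinarith
      · intro a b
        refine ⟨max a b, fun x hx => ?_, fun x hx => ?_⟩ <;>
        · simp only [Set.mem_setOf_eq] at hx ⊢
          have hga := hg0 x
          have h1 : ((a : ℝ) : ℝ) ≤ ((max a b : ℕ) : ℝ) := by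
            exact_mod_cast Nat.le_max_left a b
          have h2 : ((b : ℝ) : ℝ) ≤ ((max a b : ℕ) : ℝ) := by
            exact_mod_cast Nat.le_max_right a b
          nlinarith
    refine ⟨(c : ℝ) • Bᵀ, ?_⟩
    intro x hx
    have hmat : (A - B * ((c : ℝ) • Bᵀ)) + (A - B * ((c : ℝ) • Bᵀ))ᵀ
        = S - ((2 * c : ℝ)) • (B * Bᵀ) := by
      rw [Matrix.mul_smul, transpose_sub, transpose_smul, transpose_mul,
        transpose_transpose, hS]
      rw [two_mul, add_smul]
      abel
    rw [hmat]
    have hq : x ⬝ᵥ ((S - ((2 * c : ℝ)) • (B * Bᵀ)) *ᵥ x) = f x - 2 * c * g x := by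
      rw [sub_mulVec, dotProduct_sub, smul_mulVec, dotProduct_smul, smul_eq_mul]
    rw [hq]
    have hxn : ‖x‖ ≠ 0 := norm_ne_zero_iff.mpr hx
    have hxp : (0 : ℝ) < ‖x‖ := lt_of_le_of_ne (norm_nonneg x) (Ne.symm hxn)
    set y := ‖x‖⁻¹ • x with hy
    have hyn : ‖y‖ = 1 := by
      rw [hy, norm_smul, norm_inv, norm_norm, inv_mul_cancel₀ hxn]
    have hmem : y ∈ Metric.sphere (0 : Fin n → ℝ) 1 := by
      simpa [Metric.mem_sphere, dist_zero_right] using hyn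
    have key : f y - 2 * c * g y < 0 := hc hmem
    have hfy : f y = (‖x‖⁻¹) ^ 2 * f x := quad_smul S (‖x‖⁻¹) x
    have hgy : g y = (‖x‖⁻¹) ^ 2 * g x := quad_smul (B * Bᵀ) (‖x‖⁻¹) x
    rw [hfy, hgy] at key
    have hinv : (0 : ℝ) < (‖x‖⁻¹) ^ 2 := by positivity
    nlinarith
  · rintro ⟨K, hK⟩ x hx hBx
    have h1 : x ⬝ᵥ ((B * K) *ᵥ x) = 0 := by
      rw [← mulVec_mulVec, dotProduct_mulVec, ← mulVec_transpose, hBx, zero_dotProduct]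
    have h2 : x ⬝ᵥ ((B * K)ᵀ *ᵥ x) = 0 := by
      rw [transpose_mul, ← mulVec_mulVec, hBx, mulVec_zero, dotProduct_zero]
    have hdec : A + Aᵀ = ((A - B * K) + (A - B * K)ᵀ) + (B * K) + (B * K)ᵀ := by
      rw [transpose_sub]
      abel
    rw [hdec, add_mulVec, add_mulVec, dotProduct_add, dotProduct_add, h1, h2]
    have := hK x hx
    linarith
end

section
/- Let A ∈ ℝ^{n×n}, B ∈ ℝ^{n×q}, and let M := [[−(A+A^T), B],[B^T, 0]] be the associated saddle-point matrix. Suppose X ∈ ℝ^{n×n} and Y ∈ ℝ^{q×n} are such that the columns of the stacked matrix [X;Y] ∈ ℝ^{(n+q)×n} are orthonormal (X^T X + Y^T Y = I_n), and M [X;Y] = [X;Y] Λ for a diagonal positive definite matrix Λ ∈ ℝ^{n×n}. Then X is nonsingular, and the matrix K := Y X^{-1} satisfies that (A−BK) + (A−BK)^T is negative definite. -/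
open Matrix

/-- if the orthonormal columns of `[X;Y]` span an invariant subspace of
the saddle-point matrix `M` associated with positive eigenvalues (`M [X;Y] = [X;Y] Λ`,
`Λ` diagonal positive definite), then `X` is nonsingular and `K = Y X⁻¹` is a
dissipating feedback. -/
theorem invariant_subspace_gives_dissipating_K {n q : ℕ}
    (A : Matrix (Fin n) (Fin n) ℝ) (B : Matrix (Fin n) (Fin q) ℝ)
    (X : Matrix (Fin n) (Fin n) ℝ) (Y : Matrix (Fin q) (Fin n) ℝ)
    (horth : Xᵀ * X + Yᵀ * Y = 1)
    (d : Fin n → ℝ) (hd : ∀ i, 0 < d i)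
    (heig : Matrix.fromBlocks (-(A + Aᵀ)) B Bᵀ 0 * Matrix.fromRows X Y =
      Matrix.fromRows X Y * Matrix.diagonal d) :
    IsUnit X.det ∧
      ∀ x : Fin n → ℝ, x ≠ 0 →
        x ⬝ᵥ (((A - B * (Y * X⁻¹)) + (A - B * (Y * X⁻¹))ᵀ) *ᵥ x) < 0 := by
  set D := Matrix.diagonal d with hD
  -- extract the two block equations
  rw [Matrix.fromBlocks_mul_fromRows, Matrix.fromRows_mul, Matrix.fromRows_ext_iff] at heig
  obtain ⟨E1, E2⟩ := heig
  rw [Matrix.zero_mul, add_zero] at E2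
  -- E1 : -(A + Aᵀ) * X + B * Y = X * D,  E2 : Bᵀ * X = Y * D
  -- key identity: Xᵀ (A+Aᵀ) X = Xᵀ B Y + Yᵀ Bᵀ X - D
  have key : Xᵀ * (A + Aᵀ) * X = Xᵀ * (B * Y) + Yᵀ * (Bᵀ * X) - D := by
    have h1 : Xᵀ * (-(A + Aᵀ) * X + B * Y) = Xᵀ * X * D := by
      rw [E1, Matrix.mul_assoc]
    have h2 : Yᵀ * (Bᵀ * X) = Yᵀ * Y * D := by rw [E2, Matrix.mul_assoc]
    have h3 : Xᵀ * (-(A + Aᵀ) * X + B * Y) + Yᵀ * (Bᵀ * X)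
        = (Xᵀ * X + Yᵀ * Y) * D := by rw [h1, h2, add_mul]
    rw [horth, one_mul] at h3
    have h4 : -(Xᵀ * ((A + Aᵀ) * X)) + Xᵀ * (B * Y) + Yᵀ * (Bᵀ * X) = D := by
      calc -(Xᵀ * ((A + Aᵀ) * X)) + Xᵀ * (B * Y) + Yᵀ * (Bᵀ * X)
          = Xᵀ * (-(A + Aᵀ) * X + B * Y) + Yᵀ * (Bᵀ * X) := by
            rw [Matrix.mul_add, Matrix.neg_mul, Matrix.mul_neg]
        _ = D := h3
    rw [Matrix.mul_assoc, ← h4]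
    abel
  -- positivity of the quadratic form of D
  have hDpos : ∀ v : Fin n → ℝ, v ≠ 0 → 0 < v ⬝ᵥ (D *ᵥ v) := by
    intro v hv
    have hsum : v ⬝ᵥ (D *ᵥ v) = ∑ i, d i * (v i)^2 := by
      simp only [hD, Matrix.mulVec_diagonal, dotProduct]
      exact Finset.sum_congr rfl fun i _ => by ring
    rw [hsum]
    obtain ⟨i, hi⟩ := Function.ne_iff.mp hv
    apply Finset.sum_pos'
    · exact fun j _ => mul_nonneg (hd j).le (sq_nonneg _)
    · exact ⟨i, Finset.mem_univ i, mul_pos (hd i) (lt_of_le_of_ne (sq_nonneg _) (Ne.symm (pow_ne_zero 2 hi)))⟩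
  -- X is nonsingular
  have hX : IsUnit X.det := by
    by_contra h
    have hdet : X.det = 0 := by
      simpa [isUnit_iff_ne_zero] using h
    obtain ⟨v, hv, hXv⟩ := Matrix.exists_mulVec_eq_zero_iff.mpr hdet
    have hM : D = Xᵀ * (B * Y) + Yᵀ * (Bᵀ * X) - Xᵀ * (A + Aᵀ) * X := by
      rw [key]; abel
    have h0 : v ⬝ᵥ (D *ᵥ v) = 0 := by
      rw [hM]
      have e1 : (Xᵀ * (A + Aᵀ) * X) *ᵥ v = 0 := by
        rw [← Matrix.mulVec_mulVec, hXv, Matrix.mulVec_zero]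
      have e2 : (Yᵀ * (Bᵀ * X)) *ᵥ v = 0 := by
        rw [← Matrix.mulVec_mulVec, ← Matrix.mulVec_mulVec, hXv]
        simp
      have e3 : v ⬝ᵥ ((Xᵀ * (B * Y)) *ᵥ v) = 0 := by
        rw [← Matrix.mulVec_mulVec, Matrix.dotProduct_mulVec, Matrix.vecMul_transpose, hXv]
        simp
      rw [Matrix.sub_mulVec, Matrix.add_mulVec, e1, e2, dotProduct_sub, dotProduct_add, e3]
      simp
    exact absurd h0 (ne_of_gt (hDpos v hv))
  refine ⟨hX, ?_⟩
  have hXinv : X * X⁻¹ = 1 := Matrix.mul_nonsing_inv X hX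
  have hXinv' : X⁻¹ * X = 1 := Matrix.nonsing_inv_mul X hX
  set K := Y * X⁻¹ with hK
  have hKX : K * X = Y := by rw [hK, Matrix.mul_assoc, hXinv', Matrix.mul_one]
  have hS : Xᵀ * ((A - B * K) + (A - B * K)ᵀ) * X = -D := by
    have expand : Xᵀ * ((A - B * K) + (A - B * K)ᵀ) * X
        = Xᵀ * (A + Aᵀ) * X - Xᵀ * (B * (K * X)) - (K * X)ᵀ * (Bᵀ * X) := by
      rw [Matrix.transpose_sub, Matrix.transpose_mul]
      simp only [Matrix.mul_add, Matrix.add_mul, Matrix.mul_sub, Matrix.sub_mul,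
        Matrix.transpose_mul, Matrix.mul_assoc]
      abel
    rw [expand, hKX, key]
    abel
  intro x hx
  set u := X⁻¹ *ᵥ x with hu
  have hxu : x = X *ᵥ u := by
    rw [hu, Matrix.mulVec_mulVec, hXinv, Matrix.one_mulVec]
  have hune : u ≠ 0 := by
    intro h
    apply hx
    rw [hxu, h, Matrix.mulVec_zero]
  have hquad : x ⬝ᵥ (((A - B * K) + (A - B * K)ᵀ) *ᵥ x) = u ⬝ᵥ ((-D) *ᵥ u) := by
    rw [← hS, ← Matrix.mulVec_mulVec, ← Matrix.mulVec_mulVec,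
      Matrix.dotProduct_mulVec u, Matrix.vecMul_transpose, ← hxu]
  rw [hquad, Matrix.neg_mulVec, dotProduct_neg]
  exact neg_neg_of_pos (hDpos _ hune)
end

section
/- Let A ∈ ℝ^{n×n}, B ∈ ℝ^{n×q}, and let M := [[−(A+A^T), B],[B^T, 0]] be the associated saddle-point matrix. Suppose X ∈ ℝ^{n×n} is nonsingular, Y ∈ ℝ^{q×n}, and M [X;Y] = [X;Y] Λ for a diagonal positive definite matrix Λ ∈ ℝ^{n×n}. Then B^T X = Y Λ, and consequently the feedback matrix K := Y X^{-1} satisfies rank(K) = rank(Y) = rank(B); in particular K = B^T X Λ^{-1} X^{-1}, i.e. K = B^T W for the nonsingular matrix W = X Λ^{-1} X^{-1}. -/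
open Matrix

/-!
The second block row of `M [X;Y] = [X;Y] Λ` reads `Bᵀ X = Y Λ`, because the lower right block
of `M` vanishes. Hence `Y = Bᵀ (X Λ⁻¹)` and `K = Y X⁻¹ = Bᵀ (X Λ⁻¹ X⁻¹)`; multiplying by the
invertible matrices `X Λ⁻¹` and `X⁻¹` preserves rank, and `X Λ⁻¹ X⁻¹` is a conjugate of `Λ⁻¹`.
-/

namespace Matrix

variable {m n p : Type*} [Fintype n] {R : Type*}

theorem mul_eq_mul_of_fromBlocks_zero_mul_fromRows_eq [Fintype p] [Semiring R]
    {P : Matrix n n R} {Q : Matrix n p R} {C : Matrix p n R} {X L : Matrix n n R}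
    {Y : Matrix p n R}
    (h : fromBlocks P Q C 0 * fromRows X Y = fromRows X Y * L) : C * X = Y * L := by
  rw [fromBlocks_mul_fromRows, fromRows_mul, fromRows_ext_iff] at h
  simpa only [Matrix.zero_mul, add_zero] using h.2

variable [DecidableEq n] [CommRing R] {C Y : Matrix m n R} {X L : Matrix n n R}

theorem eq_mul_mul_inv_of_mul_eq_mul (hL : IsUnit L.det) (h : C * X = Y * L) :
    Y = C * (X * L⁻¹) := by
  rw [← Matrix.mul_assoc, h, mul_nonsing_inv_cancel_right _ _ hL]

theorem rank_eq_of_mul_eq_mul (hX : IsUnit X.det) (hL : IsUnit L.det) (h : C * X = Y * L) :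
    Y.rank = C.rank := by
  have hXL : IsUnit (X * L⁻¹).det := by
    rw [det_mul, det_nonsing_inv]
    exact hX.mul hL.ringInverse
  rw [eq_mul_mul_inv_of_mul_eq_mul hL h, rank_mul_eq_left_of_isUnit_det _ _ hXL]

end Matrix

/-- if `X` is nonsingular and `M [X;Y] = [X;Y] Λ` with `Λ = diagonal d`
positive definite, then `Bᵀ X = Y Λ`, `K = Y X⁻¹` satisfies
`rank K = rank Y = rank B`, and `K = Bᵀ W` with `W = X Λ⁻¹ X⁻¹` nonsingular. -/
theorem feedback_rank_and_factorization {n q : ℕ}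
    (A : Matrix (Fin n) (Fin n) ℝ) (B : Matrix (Fin n) (Fin q) ℝ)
    (X : Matrix (Fin n) (Fin n) ℝ) (hX : IsUnit X.det)
    (Y : Matrix (Fin q) (Fin n) ℝ)
    (d : Fin n → ℝ) (hd : ∀ i, 0 < d i)
    (heig : Matrix.fromBlocks (-(A + Aᵀ)) B Bᵀ 0 * Matrix.fromRows X Y =
      Matrix.fromRows X Y * Matrix.diagonal d) :
    Bᵀ * X = Y * Matrix.diagonal d ∧
      (Y * X⁻¹).rank = Y.rank ∧ Y.rank = B.rank ∧
      Y * X⁻¹ = Bᵀ * (X * (Matrix.diagonal d)⁻¹ * X⁻¹) ∧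
      IsUnit (X * (Matrix.diagonal d)⁻¹ * X⁻¹).det := by
  have hΛ : IsUnit (diagonal d).det := by
    simpa [det_diagonal, Finset.prod_ne_zero_iff] using fun i => (hd i).ne'
  have hBX : Bᵀ * X = Y * diagonal d := mul_eq_mul_of_fromBlocks_zero_mul_fromRows_eq heig
  refine ⟨hBX, rank_mul_eq_left_of_isUnit_det _ _ (isUnit_nonsing_inv_det X hX),
    (rank_eq_of_mul_eq_mul hX hΛ hBX).trans (rank_transpose B), ?_, ?_⟩
  · calc Y * X⁻¹ = Bᵀ * (X * (diagonal d)⁻¹) * X⁻¹ := by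
          rw [← eq_mul_mul_inv_of_mul_eq_mul hΛ hBX]
      _ = Bᵀ * (X * (diagonal d)⁻¹ * X⁻¹) := by rw [Matrix.mul_assoc]
  · rw [det_conj ((isUnit_iff_isUnit_det X).mpr hX)]
    exact isUnit_nonsing_inv_det _ hΛ
end

section
/- Let M ∈ ℝ^{(n+q)×(n+q)} be symmetric with eigendecomposition M = Q₁ Λ₊ Q₁^T + Q₂ Λ₋ Q₂^T, where [Q₁, Q₂] is orthogonal, Λ₊ ∈ ℝ^{n×n} is diagonal positive definite and Λ₋ ∈ ℝ^{q×q} is diagonal negative definite. Let H₁ ∈ ℝ^{n×n} be nonsingular and H₂ ∈ ℝ^{q×n} be such that ‖H₂ H₁^{-1}‖₂² · max λ(|Λ₋|) < min λ(Λ₊). Then the matrix Z := Q₁ H₁ + Q₂ H₂ ∈ ℝ^{(n+q)×n} satisfies that Z^T M Z is positive definite. -/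
open Matrix
open scoped Matrix.Norms.L2Operator

/-!
Orthogonality of `[Q₁, Q₂]` reduces the quadratic form of `Zᵀ M Z` at `x` to
`∑ Λ₊ᵢ uᵢ² + ∑ Λ₋ⱼ vⱼ²` with `u = H₁ x ≠ 0` and `v = H₂ x = (H₂ H₁⁻¹) u`. Hence
`‖v‖² ≤ ‖H₂ H₁⁻¹‖² ‖u‖²`, and the negative part is at most `max |Λ₋| · ‖H₂ H₁⁻¹‖² ‖u‖²`,
which the hypothesis makes strictly smaller than `min Λ₊ · ‖u‖²`, a lower bound for the
positive part.
-/

namespace Matrix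

variable {R : Type*} [CommRing R] {k m n p : Type*} [Fintype m] [Fintype n] [Fintype p]

theorem transpose_mul_mul_of_fromCols_orthogonal [DecidableEq n] [DecidableEq p]
    {Q₁ : Matrix m n R} {Q₂ : Matrix m p R} (horth : (fromCols Q₁ Q₂)ᵀ * fromCols Q₁ Q₂ = 1)
    (A : Matrix n k R) (B : Matrix p k R) (D₁ : Matrix n n R) (D₂ : Matrix p p R) :
    (Q₁ * A + Q₂ * B)ᵀ * (Q₁ * D₁ * Q₁ᵀ + Q₂ * D₂ * Q₂ᵀ) * (Q₁ * A + Q₂ * B)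
      = Aᵀ * D₁ * A + Bᵀ * D₂ * B := by
  rw [transpose_fromCols, fromRows_mul_fromCols, ← fromBlocks_one, fromBlocks_inj] at horth
  obtain ⟨h₁₁, h₁₂, h₂₁, h₂₂⟩ := horth
  have e₁₁ (X : Matrix n k R) : Q₁ᵀ * (Q₁ * X) = X := by
    rw [← Matrix.mul_assoc, h₁₁, Matrix.one_mul]
  have e₁₂ (X : Matrix p k R) : Q₁ᵀ * (Q₂ * X) = 0 := by
    rw [← Matrix.mul_assoc, h₁₂, Matrix.zero_mul]
  have e₂₁ (X : Matrix n k R) : Q₂ᵀ * (Q₁ * X) = 0 := by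
    rw [← Matrix.mul_assoc, h₂₁, Matrix.zero_mul]
  have e₂₂ (X : Matrix p k R) : Q₂ᵀ * (Q₂ * X) = X := by
    rw [← Matrix.mul_assoc, h₂₂, Matrix.one_mul]
  simp only [transpose_add, transpose_mul, Matrix.add_mul, Matrix.mul_add, Matrix.mul_assoc,
    e₁₁, e₁₂, e₂₁, e₂₂, Matrix.mul_zero, add_zero, zero_add]

theorem dotProduct_transpose_mul_diagonal_mul_mulVec [DecidableEq m] (A : Matrix m n R)
    (d : m → R) (x : n → R) :
    x ⬝ᵥ ((Aᵀ * diagonal d * A) *ᵥ x) = ∑ i, d i * (A *ᵥ x) i ^ 2 := by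
  rw [← mulVec_mulVec, ← mulVec_mulVec, dotProduct_mulVec, vecMul_transpose]
  simp only [dotProduct, mulVec_diagonal]
  exact Finset.sum_congr rfl fun i _ => by ring

theorem sum_sq_mulVec_le [DecidableEq n] (A : Matrix m n ℝ) (u : n → ℝ) :
    ∑ i, (A *ᵥ u) i ^ 2 ≤ ‖A‖ ^ 2 * ∑ j, u j ^ 2 := by
  have h := pow_le_pow_left₀ (norm_nonneg _) (A.l2_opNorm_mulVec (WithLp.toLp 2 u)) 2
  simpa [mul_pow, EuclideanSpace.real_norm_sq_eq] using h

end Matrix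

theorem Finset.sum_mul_sq_lt_sum_mul_sq {ι κ : Type*} [Fintype ι] [Fintype κ]
    {a u : ι → ℝ} {b v : κ → ℝ} {c : ℝ} (ha : ∀ i, 0 < a i) (hb : ∀ j, 0 ≤ b j)
    (hab : ∀ i j, c ^ 2 * b j < a i) (hvu : ∑ j, v j ^ 2 ≤ c ^ 2 * ∑ i, u i ^ 2)
    (hu : u ≠ 0) :
    ∑ j, b j * v j ^ 2 < ∑ i, a i * u i ^ 2 := by
  obtain ⟨i₁, hi₁⟩ := Function.ne_iff.mp hu
  have hU : 0 < ∑ i, u i ^ 2 :=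
    Finset.sum_pos' (fun i _ => sq_nonneg (u i)) ⟨i₁, Finset.mem_univ _, sq_pos_of_ne_zero hi₁⟩
  obtain ⟨i₀, -, hi₀⟩ := Finset.univ.exists_min_image a ⟨i₁, Finset.mem_univ _⟩
  have hA : a i₀ * ∑ i, u i ^ 2 ≤ ∑ i, a i * u i ^ 2 := by
    rw [Finset.mul_sum]
    gcongr with i
    exact hi₀ i (Finset.mem_univ i)
  rcases isEmpty_or_nonempty κ with hκ | hκ
  · simpa using (mul_pos (ha i₀) hU).trans_le hA
  obtain ⟨j₀, -, hj₀⟩ := Finset.univ.exists_max_image b Finset.univ_nonempty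
  calc ∑ j, b j * v j ^ 2 ≤ b j₀ * ∑ j, v j ^ 2 := by
        rw [Finset.mul_sum]
        gcongr with j
        exact hj₀ j (Finset.mem_univ j)
    _ ≤ b j₀ * (c ^ 2 * ∑ i, u i ^ 2) := mul_le_mul_of_nonneg_left hvu (hb j₀)
    _ = c ^ 2 * b j₀ * ∑ i, u i ^ 2 := by ring
    _ < a i₀ * ∑ i, u i ^ 2 := mul_lt_mul_of_pos_right (hab i₀ j₀) hU
    _ ≤ ∑ i, a i * u i ^ 2 := hA

theorem ZtMZ_posdef_general {n q : ℕ}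
    (M : Matrix (Fin n ⊕ Fin q) (Fin n ⊕ Fin q) ℝ)
    (Q₁ : Matrix (Fin n ⊕ Fin q) (Fin n) ℝ) (Q₂ : Matrix (Fin n ⊕ Fin q) (Fin q) ℝ)
    (horth : (Matrix.fromCols Q₁ Q₂)ᵀ * Matrix.fromCols Q₁ Q₂ = 1)
    (dp : Fin n → ℝ) (hdp : ∀ i, 0 < dp i)
    (dm : Fin q → ℝ)
    (hdecomp : M = Q₁ * Matrix.diagonal dp * Q₁ᵀ + Q₂ * Matrix.diagonal dm * Q₂ᵀ)
    (H₁ : Matrix (Fin n) (Fin n) ℝ) (hH₁ : IsUnit H₁.det)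
    (H₂ : Matrix (Fin q) (Fin n) ℝ)
    (hnorm : ∀ i j, ‖H₂ * H₁⁻¹‖ ^ 2 * |dm j| < dp i) :
    ∀ x : Fin n → ℝ, x ≠ 0 →
      0 < x ⬝ᵥ (((Q₁ * H₁ + Q₂ * H₂)ᵀ * M * (Q₁ * H₁ + Q₂ * H₂)) *ᵥ x) := by
  intro x hx
  rw [hdecomp, transpose_mul_mul_of_fromCols_orthogonal horth, add_mulVec, dotProduct_add,
    dotProduct_transpose_mul_diagonal_mul_mulVec, dotProduct_transpose_mul_diagonal_mul_mulVec]
  have hu : H₁ *ᵥ x ≠ 0 := by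
    rwa [Ne, ← mulVec_zero H₁, (mulVec_injective_iff_isUnit.mpr
      ((isUnit_iff_isUnit_det H₁).mpr hH₁)).eq_iff]
  have hv : H₂ *ᵥ x = (H₂ * H₁⁻¹) *ᵥ (H₁ *ᵥ x) := by
    rw [mulVec_mulVec, Matrix.mul_assoc, nonsing_inv_mul H₁ hH₁, Matrix.mul_one]
  have hvu := sum_sq_mulVec_le (H₂ * H₁⁻¹) (H₁ *ᵥ x)
  rw [← hv] at hvu
  have hneg : -∑ j, |dm j| * (H₂ *ᵥ x) j ^ 2 ≤ ∑ j, dm j * (H₂ *ᵥ x) j ^ 2 := by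
    rw [← Finset.sum_neg_distrib]
    gcongr with j
    rw [← neg_mul]
    exact mul_le_mul_of_nonneg_right (neg_abs_le _) (sq_nonneg _)
  linarith [Finset.sum_mul_sq_lt_sum_mul_sq hdp (fun j => abs_nonneg (dm j)) hnorm hvu hu]

/-- Appendix A computation: with `M = Q₁Λ₊Q₁ᵀ + Q₂Λ₋Q₂ᵀ`,
`[Q₁,Q₂]` orthogonal, `H₁` nonsingular and `‖H₂H₁⁻¹‖₂² · maxλ(|Λ₋|) < minλ(Λ₊)`,
the matrix `Z = Q₁H₁ + Q₂H₂` makes `Zᵀ M Z` positive definite. -/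
theorem ZtMZ_posdef {n q : ℕ}
    (M : Matrix (Fin n ⊕ Fin q) (Fin n ⊕ Fin q) ℝ) (hM : Mᵀ = M)
    (Q₁ : Matrix (Fin n ⊕ Fin q) (Fin n) ℝ) (Q₂ : Matrix (Fin n ⊕ Fin q) (Fin q) ℝ)
    (horth : (Matrix.fromCols Q₁ Q₂)ᵀ * Matrix.fromCols Q₁ Q₂ = 1)
    (dp : Fin n → ℝ) (hdp : ∀ i, 0 < dp i)
    (dm : Fin q → ℝ) (hdm : ∀ j, dm j < 0)
    (hdecomp : M = Q₁ * Matrix.diagonal dp * Q₁ᵀ + Q₂ * Matrix.diagonal dm * Q₂ᵀ)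
    (H₁ : Matrix (Fin n) (Fin n) ℝ) (hH₁ : IsUnit H₁.det)
    (H₂ : Matrix (Fin q) (Fin n) ℝ)
    (hnorm : ∀ i j, ‖H₂ * H₁⁻¹‖ ^ 2 * |dm j| < dp i) :
    ∀ x : Fin n → ℝ, x ≠ 0 →
      0 < x ⬝ᵥ (((Q₁ * H₁ + Q₂ * H₂)ᵀ * M * (Q₁ * H₁ + Q₂ * H₂)) *ᵥ x) :=
  ZtMZ_posdef_general M Q₁ Q₂ horth dp hdp dm hdecomp H₁ hH₁ H₂ hnorm
end

section
/- Let A ∈ ℝ^{n×n}, B ∈ ℝ^{n×q}, let D ∈ ℝ^{(n+q)×(n+q)} be symmetric positive definite, let M := [[−(A+A^T), B],[B^T, 0]], and suppose X ∈ ℝ^{n×n}, Y ∈ ℝ^{q×n} satisfy [X;Y]^T D [X;Y] = I_n and M [X;Y] = D [X;Y] Λ for a diagonal positive definite Λ ∈ ℝ^{n×n}. Then X is nonsingular and K := Y X^{-1} satisfies that (A−BK)+(A−BK)^T is negative definite. -/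
/-!
With `V = [X;Y]`, the two hypotheses give `Vᵀ M V = Λ`. If `X v = 0` then `V v = [0; Y v]`, at
which the quadratic form of `M` vanishes because its lower-right block is zero; since `Λ` is
positive definite this forces `v = 0`, so `X` is invertible. Then `V = [I; K] X` with
`K = Y X⁻¹`, and `[I; K]ᵀ M [I; K] = -((A - B K) + (A - B K)ᵀ)`, which is therefore congruent
to the positive definite `Λ`.
-/

open Matrix

namespace Matrix

variable {R : Type*} {m n : Type*} [Fintype m] [Fintype n]

theorem sumElim_zero_dotProduct_fromBlocks_mulVec [CommRing R] (P : Matrix n n R)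
    (Q : Matrix n m R) (S : Matrix m n R) (T : Matrix m m R) (w : m → R) :
    Sum.elim 0 w ⬝ᵥ (fromBlocks P Q S T *ᵥ Sum.elim 0 w) = w ⬝ᵥ (T *ᵥ w) := by
  simp [fromBlocks_mulVec, sumElim_dotProduct_sumElim, Function.comp_def, ← Pi.zero_def]

theorem isUnit_det_of_posDef_transpose_fromRows_mul_fromBlocks_zero_mul
    [Field R] [PartialOrder R] [StarRing R] [TrivialStar R] [DecidableEq n]
    {X : Matrix n n R} {Y : Matrix m n R} {P : Matrix n n R} {Q : Matrix n m R}
    {S : Matrix m n R}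
    (h : ((fromRows X Y)ᵀ * fromBlocks P Q S 0 * fromRows X Y).PosDef) : IsUnit X.det := by
  rw [isUnit_iff_ne_zero]
  intro hdet
  obtain ⟨v, hv, hXv⟩ := exists_mulVec_eq_zero_iff.mpr hdet
  have hpos := h.dotProduct_mulVec_pos hv
  rw [star_trivial, ← mulVec_mulVec, ← mulVec_mulVec, dotProduct_mulVec, vecMul_transpose,
    fromRows_mulVec, hXv, sumElim_zero_dotProduct_fromBlocks_mulVec, zero_mulVec,
    dotProduct_zero] at hpos
  exact hpos.false

theorem transpose_fromRows_one_mul_fromBlocks_mul_fromRows_one [CommRing R] [DecidableEq n]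
    (A : Matrix n n R) (B : Matrix n m R) (K : Matrix m n R) :
    (fromRows (1 : Matrix n n R) K)ᵀ * fromBlocks (-(A + Aᵀ)) B Bᵀ 0 *
      fromRows (1 : Matrix n n R) K =
      -((A - B * K) + (A - B * K)ᵀ) := by
  rw [transpose_fromRows, Matrix.mul_assoc, fromBlocks_mul_fromRows, fromCols_mul_fromRows]
  simp only [transpose_one, Matrix.one_mul, Matrix.mul_one, Matrix.zero_mul, add_zero,
    transpose_sub, transpose_mul]
  abel

end Matrix

theorem pencil_eigvecs_give_dissipating_K_general {n q : ℕ}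
    (A : Matrix (Fin n) (Fin n) ℝ) (B : Matrix (Fin n) (Fin q) ℝ)
    (D : Matrix (Fin n ⊕ Fin q) (Fin n ⊕ Fin q) ℝ)
    (X : Matrix (Fin n) (Fin n) ℝ) (Y : Matrix (Fin q) (Fin n) ℝ)
    (horth : (Matrix.fromRows X Y)ᵀ * D * Matrix.fromRows X Y = 1)
    (d : Fin n → ℝ) (hd : ∀ i, 0 < d i)
    (heig : Matrix.fromBlocks (-(A + Aᵀ)) B Bᵀ 0 * Matrix.fromRows X Y =
      D * Matrix.fromRows X Y * Matrix.diagonal d) :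
    IsUnit X.det ∧
      ∀ x : Fin n → ℝ, x ≠ 0 →
        x ⬝ᵥ (((A - B * (Y * X⁻¹)) + (A - B * (Y * X⁻¹))ᵀ) *ᵥ x) < 0 := by
  have hΛ : (fromRows X Y)ᵀ * fromBlocks (-(A + Aᵀ)) B Bᵀ 0 * fromRows X Y = diagonal d := by
    rw [Matrix.mul_assoc, heig, ← Matrix.mul_assoc, ← Matrix.mul_assoc, horth, Matrix.one_mul]
  have hX : IsUnit X.det :=
    isUnit_det_of_posDef_transpose_fromRows_mul_fromBlocks_zero_mul (hΛ ▸ PosDef.diagonal hd)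
  have hV : fromRows X Y = fromRows 1 (Y * X⁻¹) * X := by
    rw [fromRows_mul, Matrix.one_mul, Matrix.mul_assoc, nonsing_inv_mul X hX, Matrix.mul_one]
  have hneg : (-((A - B * (Y * X⁻¹)) + (A - B * (Y * X⁻¹))ᵀ)).PosDef := by
    rw [← (isUnit_iff_isUnit_det X).mpr hX |>.posDef_star_left_conjugate_iff,
      star_eq_conjTranspose, conjTranspose_eq_transpose_of_trivial,
      ← transpose_fromRows_one_mul_fromBlocks_mul_fromRows_one]
    convert PosDef.diagonal hd using 1
    rw [← hΛ, hV, transpose_mul]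
    simp only [Matrix.mul_assoc]
  refine ⟨hX, fun x hx => ?_⟩
  have hpos := hneg.dotProduct_mulVec_pos hx
  rw [star_trivial, neg_mulVec, dotProduct_neg] at hpos
  exact neg_pos.mp hpos

/-- if `[X;Y]ᵀ D [X;Y] = I` and `M [X;Y] = D [X;Y] Λ` with `D`
symmetric positive definite and `Λ` diagonal positive definite, then `X` is nonsingular
and `K = Y X⁻¹` is a dissipating feedback. -/
theorem pencil_eigvecs_give_dissipating_K {n q : ℕ}
    (A : Matrix (Fin n) (Fin n) ℝ) (B : Matrix (Fin n) (Fin q) ℝ)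
    (D : Matrix (Fin n ⊕ Fin q) (Fin n ⊕ Fin q) ℝ) (hD : D.PosDef)
    (X : Matrix (Fin n) (Fin n) ℝ) (Y : Matrix (Fin q) (Fin n) ℝ)
    (horth : (Matrix.fromRows X Y)ᵀ * D * Matrix.fromRows X Y = 1)
    (d : Fin n → ℝ) (hd : ∀ i, 0 < d i)
    (heig : Matrix.fromBlocks (-(A + Aᵀ)) B Bᵀ 0 * Matrix.fromRows X Y =
      D * Matrix.fromRows X Y * Matrix.diagonal d) :
    IsUnit X.det ∧
      ∀ x : Fin n → ℝ, x ≠ 0 →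
        x ⬝ᵥ (((A - B * (Y * X⁻¹)) + (A - B * (Y * X⁻¹))ᵀ) *ᵥ x) < 0 :=
  pencil_eigvecs_give_dissipating_K_general A B D X Y horth d hd heig
end

section
/- Let A ∈ ℝ^{n×n}, B ∈ ℝ^{n×q}. Assume the largest eigenvalue of Sym(A) := (A+A^T)/2 is positive, and let K₁ ∈ ℝ^{q×n} be a dissipating feedback, i.e. (A−BK₁)+(A−BK₁)^T is negative definite. Then there exists ρ₀ ∈ (0,1) such that K₂ := (1−ρ₀)K₁ is a weakly dissipating feedback — i.e. (A−BK₂)+(A−BK₂)^T is negative semidefinite and its largest eigenvalue equals 0 — and ‖K₂‖_F = (1−ρ₀)‖K₁‖_F < ‖K₁‖_F. -/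
open Matrix

/-- The Frobenius norm of a real matrix. -/
noncomputable def frobNorm {q n : ℕ} (K : Matrix (Fin q) (Fin n) ℝ) : ℝ :=
  Real.sqrt (∑ i, ∑ j, (K i j) ^ 2)

/-!
Along the segment `K = (1 - ρ) K₁` the matrix `Q ρ = (A - B K) + (A - B K)ᵀ` moves
continuously from the negative definite `Q 0` to `Q 1 = A + Aᵀ`, which has a positive
eigenvalue. The set of `ρ` with `-Q ρ` positive semidefinite is closed, contains `0` and misses
`1`, so some `ρ₀ ∈ [0, 1)` in it is not an interior point from the right. Positive definiteness
is an open condition, so `-Q ρ₀` is positive semidefinite but not definite, i.e. singular; in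
particular `ρ₀ ≠ 0`.
-/

open Filter Topology Set
open scoped ComplexOrder

namespace Matrix

variable {ι : Type*} [Fintype ι]

theorem isClosed_setOf_posSemidef : IsClosed {M : Matrix ι ι ℝ | M.PosSemidef} := by
  simp only [posSemidef_iff_dotProduct_mulVec, ofPred_and, ofPred_forall]
  exact (isClosed_eq continuous_id.matrix_conjTranspose continuous_id).inter
    (isClosed_iInter fun x => isClosed_le continuous_const (by fun_prop))

theorem PosDef.of_dotProduct_mulVec_pos_of_mem_sphere {M : Matrix ι ι ℝ} (hM : M.IsHermitian)
    (h : ∀ y ∈ Metric.sphere (0 : ι → ℝ) 1, 0 < y ⬝ᵥ (M *ᵥ y)) : M.PosDef := by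
  refine .of_dotProduct_mulVec_pos hM fun x hx => ?_
  have hx' : 0 < ‖x‖⁻¹ := inv_pos.mpr (norm_pos_iff.mpr hx)
  have hy := h (‖x‖⁻¹ • x) (by simp [norm_smul, hx])
  rw [smul_dotProduct, mulVec_smul, dotProduct_smul, smul_eq_mul, smul_eq_mul] at hy
  simpa using (mul_pos_iff_of_pos_left hx').1 ((mul_pos_iff_of_pos_left hx').1 hy)

theorem eventually_posDef {X : Type*} [TopologicalSpace X] {P : X → Matrix ι ι ℝ}
    (hP : Continuous P) (hH : ∀ t, (P t).IsHermitian) {t₀ : X} (h : (P t₀).PosDef) :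
    ∀ᶠ t in 𝓝 t₀, (P t).PosDef := by
  -- tube lemma: positivity on the compact unit sphere survives small perturbations of `t`
  have hF : Continuous fun z : X × (ι → ℝ) => z.2 ⬝ᵥ (P z.1 *ᵥ z.2) := by fun_prop
  refine ((isCompact_sphere (0 : ι → ℝ) 1).eventually_forall_of_forall_eventually
    (P := fun t y => 0 < y ⬝ᵥ (P t *ᵥ y)) fun y hy => ?_).mono
    fun t ht => .of_dotProduct_mulVec_pos_of_mem_sphere (hH t) ht
  exact continuousAt_const.eventually_lt hF.continuousAt
    (by simpa using h.dotProduct_mulVec_pos (ne_zero_of_mem_sphere one_ne_zero ⟨y, hy⟩))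

theorem exists_mem_Ioo_posSemidef_not_isUnit_det [DecidableEq ι] {a b : ℝ} (hab : a ≤ b)
    {P : ℝ → Matrix ι ι ℝ} (hP : Continuous P) (hH : ∀ t, (P t).IsHermitian) (ha : (P a).PosDef)
    (hb : ¬ (P b).PosSemidef) : ∃ t ∈ Ioo a b, (P t).PosSemidef ∧ ¬ IsUnit (P t).det := by
  set S := {t : ℝ | (P t).PosSemidef}
  have hS : IsClosed S := isClosed_setOf_posSemidef.preimage hP
  have hnhds (t : ℝ) (ht : t ∈ S) (hdet : IsUnit (P t).det) : S ∈ 𝓝 t :=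
    (eventually_posDef hP hH (ht.posDef_iff_isUnit.2 ((isUnit_iff_isUnit_det _).2 hdet))).mono
      fun _ => PosDef.posSemidef
  obtain ⟨t, ⟨htS, hat, htb⟩, ht⟩ : ∃ t ∈ S ∩ Ico a b, S ∉ 𝓝[>] t := by
    by_contra! h
    exact hb ((hS.inter isClosed_Icc).Icc_subset_of_forall_mem_nhdsWithin ha.posSemidef h
      ⟨hab, le_rfl⟩)
  have hsing : ¬ IsUnit (P t).det := fun hdet =>
    ht (mem_nhdsWithin_of_mem_nhds (hnhds t htS hdet))
  refine ⟨t, ⟨hat.lt_of_ne ?_, htb⟩, htS, hsing⟩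
  rintro rfl
  exact hsing ((isUnit_iff_isUnit_det _).1 ha.isUnit)

theorem IsHermitian.not_posSemidef_neg {𝕜 : Type*} [RCLike 𝕜] [DecidableEq ι]
    {A : Matrix ι ι 𝕜} (hA : A.IsHermitian) {i : ι} (hi : 0 < hA.eigenvalues i) :
    ¬ (-A).PosSemidef := fun h => by
  have := h.re_dotProduct_nonneg (hA.eigenvectorBasis i)
  rw [neg_mulVec, dotProduct_neg, map_neg, ← hA.eigenvalues_eq] at this
  linarith

end Matrix

section Frobenius

attribute [local instance] Matrix.frobeniusNormedAddCommGroup Matrix.frobeniusNormedSpace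

variable {q n : ℕ}

theorem frobNorm_eq_norm (K : Matrix (Fin q) (Fin n) ℝ) : frobNorm K = ‖K‖ := by
  rw [frobenius_norm_def, frobNorm, Real.sqrt_eq_rpow]
  simp

theorem frobNorm_smul (c : ℝ) (K : Matrix (Fin q) (Fin n) ℝ) :
    frobNorm (c • K) = |c| * frobNorm K := by
  simp only [frobNorm_eq_norm, norm_smul, Real.norm_eq_abs]

theorem frobNorm_pos {K : Matrix (Fin q) (Fin n) ℝ} : 0 < frobNorm K ↔ K ≠ 0 := by
  rw [frobNorm_eq_norm, norm_pos_iff]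

end Frobenius

/-- Proposition 4.1 of the paper: if `Sym(A)` has a positive
(largest) eigenvalue and `K₁` is a dissipating feedback, then some `K₂ = (1−ρ₀)K₁`
with `ρ₀ ∈ (0,1)` is weakly dissipating, with `‖K₂‖_F = (1−ρ₀)‖K₁‖_F < ‖K₁‖_F`. -/
theorem scaled_feedback_weakly_dissipates {n q : ℕ}
    (A : Matrix (Fin n) (Fin n) ℝ) (B : Matrix (Fin n) (Fin q) ℝ)
    (hSym : ((1 / 2 : ℝ) • (A + Aᵀ)).IsHermitian)
    (hpos : ∃ i, 0 < hSym.eigenvalues i)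
    (K₁ : Matrix (Fin q) (Fin n) ℝ)
    (hK₁ : ∀ x : Fin n → ℝ, x ≠ 0 →
      x ⬝ᵥ (((A - B * K₁) + (A - B * K₁)ᵀ) *ᵥ x) < 0) :
    ∃ ρ₀ ∈ Set.Ioo (0 : ℝ) 1,
      (-((A - B * ((1 - ρ₀) • K₁)) + (A - B * ((1 - ρ₀) • K₁))ᵀ)).PosSemidef ∧
      ¬ IsUnit ((A - B * ((1 - ρ₀) • K₁)) + (A - B * ((1 - ρ₀) • K₁))ᵀ).det ∧
      frobNorm ((1 - ρ₀) • K₁) = (1 - ρ₀) * frobNorm K₁ ∧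
      frobNorm ((1 - ρ₀) • K₁) < frobNorm K₁ := by
  obtain ⟨i, hi⟩ := hpos
  set Q : ℝ → Matrix (Fin n) (Fin n) ℝ :=
    fun ρ => (A - B * ((1 - ρ) • K₁)) + (A - B * ((1 - ρ) • K₁))ᵀ
  have h0 : (-Q 0).PosDef :=
    .of_dotProduct_mulVec_pos (isHermitian_add_transpose_self _).neg fun x hx => by
      simp only [Q, sub_zero, one_smul, star_trivial, neg_mulVec, dotProduct_neg, neg_pos]
      exact hK₁ x hx
  have h1 : ¬ (-Q 1).PosSemidef := fun h => hSym.not_posSemidef_neg hi <| by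
    simpa [Q, smul_neg] using h.smul (by norm_num : (0 : ℝ) ≤ 1 / 2)
  obtain ⟨ρ, hρ, hpsd, hsing_neg⟩ := exists_mem_Ioo_posSemidef_not_isUnit_det zero_le_one
    (by fun_prop : Continuous fun ρ => -Q ρ) (fun _ => (isHermitian_add_transpose_self _).neg)
    h0 h1
  have hK : K₁ ≠ 0 := by
    rintro rfl
    exact h1 (by simpa [Q] using h0.posSemidef)
  have hfrob : frobNorm ((1 - ρ) • K₁) = (1 - ρ) * frobNorm K₁ := by
    rw [frobNorm_smul, abs_of_pos (sub_pos.2 hρ.2)]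
  have hsing : ¬ IsUnit (Q ρ).det := by
    rwa [← isUnit_iff_isUnit_det, ← IsUnit.neg_iff, isUnit_iff_isUnit_det]
  refine ⟨ρ, hρ, hpsd, hsing, hfrob, ?_⟩
  rw [hfrob]
  exact mul_lt_of_lt_one_left (frobNorm_pos.2 hK) (sub_lt_self 1 hρ.1)
end

section
/- Let A ∈ ℝ^{n×n}, B ∈ ℝ^{n×q}. Suppose Sym(A) := (A+A^T)/2 has exactly t positive eigenvalues, and let Q₋ ∈ ℝ^{n×t} be a matrix whose columns are orthonormal eigenvectors of Sym(A) associated with these t positive eigenvalues. If K ∈ ℝ^{q×n} is a dissipating feedback, i.e. (A−BK)+(A−BK)^T is negative definite, then rank(Q₋^T (B + K^T)) ≥ t. -/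
open Matrix

/-- Proposition 4.3 of the paper: if `Sym(A)` has exactly `t`
positive eigenvalues, with orthonormal eigenvectors collected in the columns of `Q₋`,
and `K` is a dissipating feedback, then `rank(Q₋ᵀ(B + Kᵀ)) ≥ t`. -/
theorem rank_lower_bound_dissipating {n q t : ℕ}
    (A : Matrix (Fin n) (Fin n) ℝ) (B : Matrix (Fin n) (Fin q) ℝ)
    (hSym : ((1 / 2 : ℝ) • (A + Aᵀ)).IsHermitian)
    (hcount : Nat.card {i : Fin n // 0 < hSym.eigenvalues i} = t)
    (Qminus : Matrix (Fin n) (Fin t) ℝ)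
    (horth : Qminusᵀ * Qminus = 1)
    (μ : Fin t → ℝ) (hμ : ∀ i, 0 < μ i)
    (heig : ((1 / 2 : ℝ) • (A + Aᵀ)) * Qminus = Qminus * Matrix.diagonal μ)
    (K : Matrix (Fin q) (Fin n) ℝ)
    (hK : ∀ x : Fin n → ℝ, x ≠ 0 →
      x ⬝ᵥ (((A - B * K) + (A - B * K)ᵀ) *ᵥ x) < 0) :
    t ≤ (Qminusᵀ * (B + Kᵀ)).rank := by
  by_contra hlt
  push_neg at hlt
  set M := Qminusᵀ * (B + Kᵀ) with hMdef
  -- rank of Mᵀ is also < t, so its kernel is nontrivial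
  have hrT : (Mᵀ).rank < t := by rwa [Matrix.rank_transpose]
  have hrn := LinearMap.finrank_range_add_finrank_ker (Mᵀ).mulVecLin
  have hdom : Module.finrank ℝ (Fin t → ℝ) = t := by simp
  have hker : LinearMap.ker (Mᵀ).mulVecLin ≠ ⊥ := by
    intro h
    rw [h, hdom] at hrn
    have : (Mᵀ).rank = t := by simpa [Matrix.rank] using hrn
    omega
  obtain ⟨v, hvmem, hv0⟩ := (Submodule.ne_bot_iff _).mp hker
  have hMv : Mᵀ *ᵥ v = 0 := hvmem
  set x : Fin n → ℝ := Qminus *ᵥ v with hxdef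
  -- Qᵀ x = v
  have hQtx : Qminusᵀ *ᵥ x = v := by
    rw [hxdef, Matrix.mulVec_mulVec, horth, Matrix.one_mulVec]
  have hx0 : x ≠ 0 := by
    intro h
    apply hv0
    rw [← hQtx, h, Matrix.mulVec_zero]
  -- Kx = -(Bᵀ x)
  have hKx : K *ᵥ x = -(Bᵀ *ᵥ x) := by
    have h1 : (Bᵀ + K) *ᵥ x = 0 := by
      have h2 : Mᵀ = (Bᵀ + K) * Qminus := by
        rw [hMdef]; simp [Matrix.transpose_mul]
      rw [hxdef, Matrix.mulVec_mulVec, ← h2, hMv]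
    rw [Matrix.add_mulVec] at h1
    linear_combination (norm := module) h1
  -- x ⬝ (A+Aᵀ) x = 2 * v ⬝ diag μ v
  have hsym : x ⬝ᵥ ((A + Aᵀ) *ᵥ x) = 2 * (v ⬝ᵥ (Matrix.diagonal μ *ᵥ v)) := by
    have h2 : (A + Aᵀ) *ᵥ x = (2 : ℝ) • (((1 / 2 : ℝ) • (A + Aᵀ)) *ᵥ x) := by
      rw [Matrix.smul_mulVec, smul_smul]
      norm_num
    rw [h2, dotProduct_smul, smul_eq_mul]
    congr 1
    have h3 : ((1 / 2 : ℝ) • (A + Aᵀ)) *ᵥ x = Qminus *ᵥ (Matrix.diagonal μ *ᵥ v) := by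
      rw [hxdef, Matrix.mulVec_mulVec, heig, ← Matrix.mulVec_mulVec]
    rw [h3, Matrix.dotProduct_mulVec, ← Matrix.mulVec_transpose, hQtx]
  -- positivity of v ⬝ diag μ v
  have hpos : 0 < v ⬝ᵥ (Matrix.diagonal μ *ᵥ v) := by
    have hform : v ⬝ᵥ (Matrix.diagonal μ *ᵥ v) = ∑ i, μ i * (v i)^2 := by
      simp only [dotProduct, Matrix.mulVec_diagonal]
      exact Finset.sum_congr rfl fun i _ => by ring
    rw [hform]
    obtain ⟨j, hj⟩ := Function.ne_iff.mp hv0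
    apply Finset.sum_pos'
    · intro i _
      exact mul_nonneg (hμ i).le (sq_nonneg _)
    · refine ⟨j, Finset.mem_univ j, mul_pos (hμ j) ?_⟩
      have hj' : v j ≠ 0 := by simpa using hj
      positivity
  -- evaluate the quadratic form
  have hquad := hK x hx0
  have hsymdot : x ⬝ᵥ ((B * K)ᵀ *ᵥ x) = x ⬝ᵥ ((B * K) *ᵥ x) := by
    rw [Matrix.mulVec_transpose, dotProduct_comm, ← Matrix.dotProduct_mulVec]
  have hexp : x ⬝ᵥ (((A - B * K) + (A - B * K)ᵀ) *ᵥ x)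
      = x ⬝ᵥ ((A + Aᵀ) *ᵥ x) - 2 * (x ⬝ᵥ ((B * K) *ᵥ x)) := by
    rw [Matrix.transpose_sub]
    simp only [Matrix.add_mulVec, Matrix.sub_mulVec, dotProduct_add,
      dotProduct_sub]
    rw [hsymdot]
    ring
  have hBK : x ⬝ᵥ ((B * K) *ᵥ x) = -((Bᵀ *ᵥ x) ⬝ᵥ (Bᵀ *ᵥ x)) := by
    rw [← Matrix.mulVec_mulVec, hKx, Matrix.mulVec_neg, dotProduct_neg,
      Matrix.dotProduct_mulVec, ← Matrix.mulVec_transpose]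
  have hnn : 0 ≤ (Bᵀ *ᵥ x) ⬝ᵥ (Bᵀ *ᵥ x) :=
    Finset.sum_nonneg fun i _ => mul_self_nonneg _
  rw [hexp, hsym, hBK] at hquad
  nlinarith
end
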